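/- Let A be a Boolean algebra, κ an infinite index set, and φ : A → M_κ a Boolean homomorphism such that the induced finitely additive measure μ = λ_κ ∘ φ on A is separable and atomless. Then there exists a Boolean subalgebra M' of M_κ which contains the image φ[A], is closed in the metric d_{λ_κ}, and is isomorphic as a Boolean algebra to the measure algebra M. -/

import Mathlib

open MeasureTheory Set Filter Topology
open scoped symmDiff ENNReal

noncomputable section

universe u v

/-- The two-element set `{0,1}`, as an additive group (addition mod 2) with the
discrete topology. -/
inductive Two : Type
  | zero
  | one
  deriving DecidableEq

instance : Fintype Two := ⟨{Two.zero, Two.one}, fun x => by cases x <;> simp⟩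

instance : Zero Two := ⟨Two.zero⟩
instance : One Two := ⟨Two.one⟩

/-- Addition modulo 2 on `{0,1}`. -/
def Two.add : Two → Two → Two
  | Two.zero, x => x
  | Two.one, Two.zero => Two.one
  | Two.one, Two.one => Two.zero

instance : Add Two := ⟨Two.add⟩
instance : Neg Two := ⟨fun x => x⟩

instance : AddCommGroup Two where
  add := (· + ·)
  zero := Two.zero
  neg := (- ·)
  add_assoc := by decide
  zero_add := by decide
  add_zero := by decide
  neg_add_cancel := by decide
  add_comm := by decide
  nsmul := nsmulRec
  zsmul := zsmulRec

instance : TopologicalSpace Two := ⊥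
instance : DiscreteTopology Two := ⟨rfl⟩

instance : IsTopologicalAddGroup Two where
  continuous_add := continuous_of_discreteTopology
  continuous_neg := continuous_of_discreteTopology

/-- The Cantor cube `{0,1}^κ`, with the product topology. -/
abbrev Cube (κ : Type u) : Type u := κ → Two

instance (κ : Type u) : MeasurableSpace (Cube κ) := borel _

instance (κ : Type u) : BorelSpace (Cube κ) := ⟨rfl⟩

/-- The fair-coin product measure `λ_κ` on `{0,1}^κ`: the Haar measure of the compact
group `{0,1}^κ`, normalized so that the whole space has measure `1`. -/
def lam (κ : Type u) : Measure (Cube κ) :=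
  Measure.addHaarMeasure ⟨⟨Set.univ, isCompact_univ⟩, by simpa using Set.univ_nonempty⟩

/-- The Boolean algebra of measurable subsets of `X`. -/
abbrev MSet (X : Type u) [MeasurableSpace X] : Type u := {s : Set X // MeasurableSet s}

/-- The ideal of `μ`-null sets in the Boolean ring of measurable subsets of `X`. -/
def nullIdeal {X : Type u} [MeasurableSpace X] (μ : Measure X) :
    Ideal (AsBoolRing (MSet X)) where
  carrier := {s | μ (ofBoolRing s : MSet X).1 = 0}
  zero_mem' := by
    show μ (ofBoolRing (0 : AsBoolRing (MSet X)) : MSet X).1 = 0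
    rw [ofBoolRing_zero]
    simpa using measure_empty (μ := μ)
  add_mem' := by
    intro a b ha hb
    show μ (ofBoolRing (a + b) : MSet X).1 = 0
    rw [ofBoolRing_add]
    refine le_antisymm ?_ (zero_le)
    calc μ ((ofBoolRing a ∆ ofBoolRing b : MSet X) : Set X)
        ≤ μ (((ofBoolRing a : MSet X) : Set X) ∪ ((ofBoolRing b : MSet X) : Set X)) := by
          refine measure_mono ?_
          simp only [symmDiff_def, MeasurableSet.sup_eq_union, MeasurableSet.coe_union,
            MeasurableSet.coe_sdiff]
          exact Set.union_subset_union Set.diff_subset Set.diff_subset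
      _ ≤ μ ((ofBoolRing a : MSet X) : Set X) + μ ((ofBoolRing b : MSet X) : Set X) :=
          measure_union_le _ _
      _ = 0 := by rw [ha, hb, add_zero]
  smul_mem' := by
    intro c x hx
    show μ (ofBoolRing (c * x) : MSet X).1 = 0
    rw [ofBoolRing_mul]
    refine le_antisymm ?_ (zero_le)
    calc μ ((ofBoolRing c ⊓ ofBoolRing x : MSet X) : Set X)
        ≤ μ ((ofBoolRing x : MSet X) : Set X) := by
          refine measure_mono ?_
          simp only [MeasurableSet.inf_eq_inter, MeasurableSet.coe_inter]
          exact Set.inter_subset_right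
      _ = 0 := hx

instance {X : Type u} [MeasurableSpace X] (μ : Measure X) :
    BooleanRing (AsBoolRing (MSet X) ⧸ nullIdeal μ) where
  isIdempotentElem a := by
    obtain ⟨x, rfl⟩ := Ideal.Quotient.mk_surjective a
    show _ * _ = _
    rw [← map_mul]
    exact congrArg _ (BooleanRing.mul_self x)

/-- The measure algebra of the measure `μ`: measurable sets modulo `μ`-null sets,
as a Boolean algebra.  For `μ = lam κ` this is the measure algebra `M_κ`. -/
abbrev MAlg (X : Type u) [MeasurableSpace X] (μ : Measure X) : Type u :=
  AsBoolAlg (AsBoolRing (MSet X) ⧸ nullIdeal μ)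

/-- The class of a measurable set in the measure algebra. -/
def MAlg.mk {X : Type u} [MeasurableSpace X] (μ : Measure X) (s : MSet X) : MAlg X μ :=
  toBoolAlg (Ideal.Quotient.mk (nullIdeal μ) (toBoolRing s))

/-- The measure induced by `μ` on its measure algebra `MAlg X μ` (with real values). -/
def mval {X : Type u} [MeasurableSpace X] (μ : Measure X) (a : MAlg X μ) : ℝ :=
  Quotient.liftOn' (ofBoolAlg a) (fun s => (μ (ofBoolRing s : MSet X).1).toReal)
    (by
      intro s t h
      have hst : s - t ∈ nullIdeal μ := by
        rwa [Submodule.quotientRel_def] at h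
      have h0 : μ (((ofBoolRing s : MSet X) : Set X) ∆ ((ofBoolRing t : MSet X) : Set X)) = 0 := by
        have hn : μ ((ofBoolRing (s - t) : MSet X) : Set X) = 0 := hst
        rw [ofBoolRing_sub] at hn
        simpa only [symmDiff_def, MeasurableSet.sup_eq_union, MeasurableSet.coe_union,
          MeasurableSet.coe_sdiff, Set.sup_eq_union] using hn
      have hc := measure_congr (μ := μ) (MeasureTheory.measure_symmDiff_eq_zero_iff.mp h0)
      simp only [hc])

/-- Separability of a finitely additive measure `μ` on a Boolean algebra: the
pseudometric space `(A, d_μ)`, `d_μ(a,b) = μ (a ∆ b)`, is separable. -/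
def FASeparable {A : Type v} [BooleanAlgebra A] (μ : A → ℝ) : Prop :=
  ∃ D : Set A, D.Countable ∧ ∀ a : A, ∀ ε : ℝ, 0 < ε → ∃ b ∈ D, μ (a ∆ b) < ε

/-- Atomlessness of a finitely additive measure `μ`: for every `ε > 0` there is a finite
partition of `⊤` into pieces each of `μ`-measure less than `ε`. -/
def FAAtomless {A : Type v} [BooleanAlgebra A] (μ : A → ℝ) : Prop :=
  ∀ ε : ℝ, 0 < ε → ∃ (N : ℕ) (f : Fin N → A),
    (∀ i, μ (f i) < ε) ∧ (∀ i j, i ≠ j → f i ⊓ f j = ⊥) ∧ Finset.univ.sup f = ⊤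

/-!
Choose a countable dense set `D ⊆ A`. Up to null sets, every measurable subset of `{0,1}^κ` is
approximated by sets depending on finitely many coordinates (regularity of `λ_κ` and the tube
lemma), so `φ[D]` lies in the closure of the sets depending only on the coordinates in a countably
infinite set `j(ℕ)`. The restriction `x ↦ x ∘ j` pushes `λ_κ` forward to `λ_ℕ`, so pulling back
along it embeds `M` into `M_κ`; the image contains the sets depending on `j(ℕ)` and is closed by
Borel–Cantelli, hence it contains the closure of `φ[D]`, which contains `φ[A]`.
-/

instance (κ : Type u) : (lam κ).IsAddHaarMeasure := by
  unfold lam; infer_instance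

instance (κ : Type u) : IsProbabilityMeasure (lam κ) :=
  ⟨Measure.addHaarMeasure_self⟩

-- The pushforward is a Haar probability measure on `Cube ι`, hence it is `λ_ι`.
theorem measurePreserving_lam_comp_right {ι κ : Type*} {j : ι → κ} (hj : j.Injective) :
    MeasurePreserving (fun x : Cube κ => x ∘ j) (lam κ) (lam ι) := by
  let restrict : Cube κ →+ Cube ι :=
    { toFun := fun x => x ∘ j, map_zero' := rfl, map_add' := fun _ _ => rfl }
  have hcont : Continuous restrict := continuous_pi fun i => continuous_apply (j i)
  have := Measure.isAddHaarMeasure_map_of_isFiniteMeasure (lam κ) restrict hcont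
    hj.surjective_comp_right
  have := Measure.isProbabilityMeasure_map (μ := lam κ) hcont.measurable.aemeasurable
  exact ⟨hcont.measurable, Measure.isAddHaarMeasure_eq_of_isProbabilityMeasure _ _⟩

def MSet.comap {X Y : Type*} [MeasurableSpace X] [MeasurableSpace Y] {f : X → Y}
    (hf : Measurable f) : BoundedLatticeHom (MSet Y) (MSet X) where
  toFun s := ⟨f ⁻¹' s, hf s.2⟩
  map_sup' _ _ := rfl
  map_inf' _ _ := rfl
  map_top' := rfl
  map_bot' := rfl

theorem measure_symmDiff_limsup_eq_zero {X : Type*} [MeasurableSpace X] {μ : Measure X}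
    {u : Set X} {s : ℕ → Set X} (h : ∑' n, μ (u ∆ s n) ≠ ∞) :
    μ (u ∆ limsup s atTop) = 0 := by
  refine measure_mono_null (fun x hx => ?_) (measure_limsup_atTop_eq_zero h)
  simp only [mem_limsup_iff_frequently_mem, Set.mem_symmDiff] at hx ⊢
  rcases hx with ⟨hu, hs⟩ | ⟨hs, hu⟩
  · exact (not_frequently.mp hs).frequently.mono fun _ hn => Or.inl ⟨hu, hn⟩
  · exact hs.mono fun _ hn => Or.inr ⟨hn, hu⟩

namespace MAlg

variable {X Y : Type*} [MeasurableSpace X] [MeasurableSpace Y] {μ : Measure X} {ν : Measure Y}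
  {f : X → Y}

theorem mk_surjective : Function.Surjective (MAlg.mk μ) := by
  intro a
  obtain ⟨s, hs⟩ := Ideal.Quotient.mk_surjective (ofBoolAlg a)
  exact ⟨ofBoolRing s, by rw [MAlg.mk, toBoolRing_ofBoolRing, hs, toBoolAlg_ofBoolAlg]⟩

theorem mk_symmDiff (s t : MSet X) : MAlg.mk μ s ∆ MAlg.mk μ t = MAlg.mk μ (s ∆ t) := by
  rw [MAlg.mk, MAlg.mk, MAlg.mk, ← toBoolAlg_add, ← map_add, toBoolRing_symmDiff]

theorem mval_mk (s : MSet X) : mval μ (MAlg.mk μ s) = (μ s).toReal := by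
  simp only [mval, MAlg.mk, ofBoolAlg_toBoolAlg]
  rfl

theorem mk_eq_mk_iff {s t : MSet X} :
    MAlg.mk μ s = MAlg.mk μ t ↔ μ ((s : Set X) ∆ t) = 0 := by
  rw [MAlg.mk, MAlg.mk, toBoolAlg_inj, Ideal.Quotient.eq]
  show μ (ofBoolRing (toBoolRing s - toBoolRing t) : MSet X).1 = 0 ↔ _
  rw [ofBoolRing_sub, ofBoolRing_toBoolRing, ofBoolRing_toBoolRing]
  rfl

theorem mval_mk_symmDiff_mk (s t : MSet X) :
    mval μ (MAlg.mk μ s ∆ MAlg.mk μ t) = (μ ((s : Set X) ∆ t)).toReal := by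
  rw [mk_symmDiff, mval_mk]
  rfl

theorem mval_symmDiff_le [IsFiniteMeasure μ] (a b c : MAlg X μ) :
    mval μ (a ∆ c) ≤ mval μ (a ∆ b) + mval μ (b ∆ c) := by
  obtain ⟨s, rfl⟩ := mk_surjective (μ := μ) a
  obtain ⟨t, rfl⟩ := mk_surjective (μ := μ) b
  obtain ⟨u, rfl⟩ := mk_surjective (μ := μ) c
  simp only [mval_mk_symmDiff_mk]
  rw [← ENNReal.toReal_add (measure_ne_top _ _) (measure_ne_top _ _)]
  exact ENNReal.toReal_mono (by finiteness) (measure_symmDiff_le _ _ _)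

def comap (hf : Measure.QuasiMeasurePreserving f μ ν) :
    BoundedLatticeHom (MAlg Y ν) (MAlg X μ) :=
  RingHom.asBoolAlg <| Ideal.Quotient.lift (nullIdeal ν)
    ((Ideal.Quotient.mk (nullIdeal μ)).comp (MSet.comap hf.measurable).asBoolRing)
    fun _ hs => Ideal.Quotient.eq_zero_iff_mem.mpr (hf.preimage_null hs)

theorem comap_mk (hf : Measure.QuasiMeasurePreserving f μ ν) (s : MSet Y) :
    comap hf (MAlg.mk ν s) = MAlg.mk μ (MSet.comap hf.measurable s) :=
  rfl

theorem comap_injective (hf : MeasurePreserving f μ ν) :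
    Function.Injective (comap hf.quasiMeasurePreserving) := by
  intro a b hab
  obtain ⟨s, rfl⟩ := mk_surjective (μ := ν) a
  obtain ⟨t, rfl⟩ := mk_surjective (μ := ν) b
  rw [comap_mk, comap_mk, mk_eq_mk_iff] at hab
  rw [mk_eq_mk_iff, ← hf.measure_preimage (s.2.symmDiff t.2).nullMeasurableSet]
  exact hab

def closure (μ : Measure X) (S : Set (MAlg X μ)) : Set (MAlg X μ) :=
  {a | ∀ ε : ℝ, 0 < ε → ∃ b ∈ S, mval μ (a ∆ b) < ε}

theorem closure_mono {S T : Set (MAlg X μ)} (h : S ⊆ T) : closure μ S ⊆ closure μ T :=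
  fun _ ha ε hε => (ha ε hε).imp fun _ hb => ⟨h hb.1, hb.2⟩

theorem closure_closure_subset [IsFiniteMeasure μ] (S : Set (MAlg X μ)) :
    closure μ (closure μ S) ⊆ closure μ S := by
  intro a ha ε hε
  obtain ⟨b, hb, hab⟩ := ha (ε / 2) (half_pos hε)
  obtain ⟨c, hc, hbc⟩ := hb (ε / 2) (half_pos hε)
  exact ⟨c, hc, (mval_symmDiff_le a b c).trans_lt (by linarith)⟩

-- A sequence of preimages converging fast enough converges to the preimage of its `limsup`,
-- by Borel–Cantelli.
theorem closure_range_comap_subset [IsFiniteMeasure μ] (hf : MeasurePreserving f μ ν) :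
    closure μ (Set.range (comap hf.quasiMeasurePreserving)) ⊆
      Set.range (comap hf.quasiMeasurePreserving) := by
  intro a ha
  obtain ⟨u, rfl⟩ := mk_surjective a
  have hseq (n : ℕ) :
      ∃ s : MSet Y, μ ((u : Set X) ∆ (f ⁻¹' s)) < ENNReal.ofReal ((1 / 2) ^ n) := by
    obtain ⟨_, ⟨b, rfl⟩, hb⟩ := ha _ (by positivity : (0 : ℝ) < (1 / 2) ^ n)
    obtain ⟨s, rfl⟩ := mk_surjective b
    rw [comap_mk, mval_mk_symmDiff_mk] at hb
    exact ⟨s, (ENNReal.lt_ofReal_iff_toReal_lt (measure_ne_top _ _)).2 hb⟩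
  choose s hs using hseq
  have hsum : ∑' n, μ ((u : Set X) ∆ (f ⁻¹' s n)) ≠ ∞ := by
    refine ne_top_of_le_ne_top ?_ (ENNReal.tsum_le_tsum fun n => (hs n).le)
    rw [← ENNReal.ofReal_tsum_of_nonneg (fun n => by positivity) summable_geometric_two]
    exact ENNReal.ofReal_ne_top
  refine ⟨MAlg.mk ν ⟨limsup (fun n => (s n : Set Y)) atTop,
    MeasurableSet.measurableSet_limsup fun n => (s n).2⟩, ?_⟩
  have hpre :
      f ⁻¹' limsup (fun n => (s n : Set Y)) atTop = limsup (fun n => f ⁻¹' s n) atTop := by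
    ext x
    simp only [Set.mem_preimage, mem_limsup_iff_frequently_mem]
  rw [comap_mk, mk_eq_mk_iff]
  change μ ((f ⁻¹' limsup (fun n => (s n : Set Y)) atTop) ∆ u) = 0
  rw [hpre, symmDiff_comm]
  exact measure_symmDiff_limsup_eq_zero hsum

end MAlg

theorem exists_isOpen_dependsOn_finset_of_isCompact_subset {κ : Type*} {α : κ → Type*}
    [∀ i, TopologicalSpace (α i)] {K U : Set (∀ i, α i)} (hK : IsCompact K) (hU : IsOpen U)
    (hKU : K ⊆ U) :
    ∃ (F : Finset κ) (c : Set (∀ i, α i)), IsOpen c ∧ DependsOn (· ∈ c) (F : Set κ) ∧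
      K ⊆ c ∧ c ⊆ U := by
  classical
  have hbox : ∀ x ∈ K, ∃ (I : Finset κ) (u : ∀ i, Set (α i)),
      (∀ i ∈ I, IsOpen (u i) ∧ x i ∈ u i) ∧ (I : Set κ).pi u ⊆ U :=
    fun x hx => isOpen_pi_iff.mp hU x (hKU hx)
  choose! I u hu huU using hbox
  have hbox_open (x : K) : IsOpen ((I x : Set κ).pi (u x)) :=
    isOpen_set_pi (I x).finite_toSet fun i hi => (hu x x.2 i hi).1
  obtain ⟨t, hKt⟩ := hK.elim_finite_subcover (fun x : K => (I x : Set κ).pi (u x)) hbox_open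
    fun x hx => Set.mem_iUnion.mpr ⟨⟨x, hx⟩, fun i hi => (hu x hx i hi).2⟩
  refine ⟨t.sup (I ∘ Subtype.val), ⋃ x ∈ t, (I x : Set κ).pi (u x),
    isOpen_biUnion fun x _ => hbox_open x, fun y z hyz => ?_, hKt,
    Set.iUnion₂_subset fun x _ => huU x x.2⟩
  simp only [Set.mem_iUnion, Set.mem_pi, eq_iff_iff]
  refine exists₂_congr fun x hx => forall₂_congr fun i hi => ?_
  rw [hyz i (Finset.mem_sup.mpr ⟨x, hx, hi⟩)]

theorem exists_dependsOn_finset_measure_symmDiff_lt {κ : Type*} (μ : Measure (Cube κ))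
    [IsFiniteMeasure μ] [μ.OuterRegular] {s : Set (Cube κ)} (hs : MeasurableSet s) {ε : ℝ≥0∞}
    (hε : ε ≠ 0) :
    ∃ (F : Finset κ) (c : Set (Cube κ)), MeasurableSet c ∧ DependsOn (· ∈ c) (F : Set κ) ∧
      μ (s ∆ c) < ε := by
  have hε2 : ε / 2 ≠ 0 := (ENNReal.half_pos hε).ne'
  obtain ⟨U, hsU, hUo, -, hU⟩ := hs.exists_isOpen_sdiff_lt (measure_ne_top μ s) hε2
  obtain ⟨V, hsV, hVo, -, hV⟩ := hs.compl.exists_isOpen_sdiff_lt (measure_ne_top μ sᶜ) hε2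
  have hVs : Vᶜ ⊆ s := Set.compl_subset_comm.mp hsV
  obtain ⟨F, c, hco, hcF, hVc, hcU⟩ := exists_isOpen_dependsOn_finset_of_isCompact_subset
    hVo.isClosed_compl.isCompact hUo (hVs.trans hsU)
  refine ⟨F, c, hco.measurableSet, hcF, ?_⟩
  have hsub : s ∆ c ⊆ (V \ sᶜ) ∪ (U \ s) := by
    rw [Set.sdiff_compl, Set.symmDiff_def]
    exact Set.union_subset_union (fun x hx => ⟨by_contra fun h => hx.2 (hVc h), hx.1⟩)
      (Set.sdiff_subset_sdiff_left hcU)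
  calc μ (s ∆ c) ≤ μ (V \ sᶜ) + μ (U \ s) := (measure_mono hsub).trans (measure_union_le _ _)
    _ < ε / 2 + ε / 2 := ENNReal.add_lt_add hV hU
    _ = ε := ENNReal.add_halves ε

theorem exists_preimage_comp_right_eq_of_dependsOn {ι κ : Type*} [Nonempty ι] {j : ι → κ}
    {c : Set (Cube κ)} (hc : MeasurableSet c) (hcj : DependsOn (· ∈ c) (Set.range j)) :
    ∃ B : Set (Cube ι), MeasurableSet B ∧ (fun x : Cube κ => x ∘ j) ⁻¹' B = c := by
  let extend : Cube ι → Cube κ := fun z i => z (Function.invFun j i)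
  have hextend : Continuous extend := continuous_pi fun i => continuous_apply _
  refine ⟨extend ⁻¹' c, hc.preimage hextend.measurable, Set.ext fun x => eq_iff_iff.mp ?_⟩
  refine hcj fun i ⟨n, hn⟩ => ?_
  exact congrArg x (Function.invFun_eq ⟨n, hn⟩)

def coordAlg {κ : Type*} (μ : Measure (Cube κ)) (T : Set κ) : Set (MAlg (Cube κ) μ) :=
  {a | ∃ c : MSet (Cube κ), DependsOn (· ∈ (c : Set (Cube κ))) T ∧ MAlg.mk μ c = a}

theorem coordAlg_mono {κ : Type*} (μ : Measure (Cube κ)) {T T' : Set κ} (h : T ⊆ T') :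
    coordAlg μ T ⊆ coordAlg μ T' :=
  fun _ ⟨c, hc, hca⟩ => ⟨c, hc.mono h, hca⟩

theorem exists_countable_mem_closure_coordAlg {κ : Type*} (μ : Measure (Cube κ))
    [IsFiniteMeasure μ] [μ.OuterRegular] (a : MAlg (Cube κ) μ) :
    ∃ T : Set κ, T.Countable ∧ a ∈ MAlg.closure μ (coordAlg μ T) := by
  obtain ⟨s, rfl⟩ := MAlg.mk_surjective a
  have happrox (n : ℕ) := exists_dependsOn_finset_measure_symmDiff_lt μ s.2
    (ENNReal.ofReal_pos.mpr (Nat.one_div_pos_of_nat (n := n))).ne'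
  choose F c hc hcF hsc using happrox
  refine ⟨⋃ n, F n, Set.countable_iUnion fun n => (F n).countable_toSet, fun ε hε => ?_⟩
  obtain ⟨n, hn⟩ := exists_nat_one_div_lt hε
  refine ⟨MAlg.mk μ ⟨c n, hc n⟩,
    ⟨_, (hcF n).mono (Set.subset_iUnion (fun n => (F n : Set κ)) n), rfl⟩, ?_⟩
  rw [MAlg.mval_mk_symmDiff_mk]
  exact (ENNReal.toReal_lt_of_lt_ofReal (hsc n)).trans hn

theorem coordAlg_range_subset_range_comap {ι κ : Type*} [Nonempty ι] {j : ι → κ}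
    (hj : j.Injective) :
    coordAlg (lam κ) (Set.range j) ⊆
      Set.range (MAlg.comap (measurePreserving_lam_comp_right hj).quasiMeasurePreserving) := by
  rintro _ ⟨c, hcj, rfl⟩
  obtain ⟨B, hB, hBc⟩ := exists_preimage_comp_right_eq_of_dependsOn c.2 hcj
  exact ⟨MAlg.mk (lam ι) ⟨B, hB⟩, by rw [MAlg.comap_mk]; congr 1; exact Subtype.ext hBc⟩

theorem exists_injective_nat_subset_range {κ : Type*} [Infinite κ] {T : Set κ}
    (hT : T.Countable) : ∃ j : ℕ → κ, j.Injective ∧ T ⊆ Set.range j := by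
  let T' := T ∪ Set.range (Infinite.natEmbedding κ)
  have : Countable T' := (hT.union (Set.countable_range _)).to_subtype
  have : Infinite T' := (Set.infinite_range_of_injective
    (Infinite.natEmbedding κ).injective).mono Set.subset_union_right |>.to_subtype
  obtain ⟨e⟩ := nonempty_equiv_of_countable (α := ℕ) (β := T')
  refine ⟨fun n => e n, Subtype.val_injective.comp e.injective, fun i hi => ?_⟩
  exact ⟨e.symm ⟨i, Or.inl hi⟩, by simp⟩

theorem separable_name_is_added_by_single_random_real_general
    {A : Type u} [BooleanAlgebra A] (κ : Type u) [Infinite κ]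
    (φ : BoundedLatticeHom A (MAlg (Cube κ) (lam κ)))
    (hsep : FASeparable (fun a : A => mval (lam κ) (φ a))) :
    ∃ S : Set (MAlg (Cube κ) (lam κ)),
      (⊥ ∈ S) ∧ (⊤ ∈ S) ∧ (∀ x ∈ S, xᶜ ∈ S) ∧ (∀ x ∈ S, ∀ y ∈ S, x ⊔ y ∈ S) ∧
      (∀ a : A, φ a ∈ S) ∧
      (∀ x : MAlg (Cube κ) (lam κ),
        (∀ ε : ℝ, 0 < ε → ∃ y ∈ S, mval (lam κ) (x ∆ y) < ε) → x ∈ S) ∧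
      Nonempty (S ≃o MAlg (Cube ℕ) (lam ℕ)) := by
  obtain ⟨D, hD, hDdense⟩ := hsep
  have hφD (a : A) : φ a ∈ MAlg.closure (lam κ) (φ '' D) := fun ε hε => by
    obtain ⟨b, hb, hab⟩ := hDdense a ε hε
    exact ⟨φ b, Set.mem_image_of_mem φ hb, by rwa [← map_symmDiff']⟩
  choose T hT hφT using fun a => exists_countable_mem_closure_coordAlg (lam κ) (φ a)
  obtain ⟨j, hj, hjT⟩ := exists_injective_nat_subset_range (hD.biUnion fun d _ => hT d)
  have hmp := measurePreserving_lam_comp_right hj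
  set Ψ := MAlg.comap hmp.quasiMeasurePreserving
  have hclosed := MAlg.closure_range_comap_subset hmp
  have hD_closure : φ '' D ⊆ MAlg.closure (lam κ) (Set.range Ψ) := by
    rintro _ ⟨d, hd, rfl⟩
    refine MAlg.closure_mono ((coordAlg_mono _ ?_).trans (coordAlg_range_subset_range_comap hj))
      (hφT d)
    exact (Set.subset_biUnion_of_mem hd).trans hjT
  let e := orderEmbeddingOfInjective Ψ (MAlg.comap_injective hmp)
  refine ⟨Set.range Ψ, ⟨⊥, map_bot Ψ⟩, ⟨⊤, map_top Ψ⟩, ?_, ?_, fun a => ?_, hclosed,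
    ⟨(OrderEmbedding.orderIso (f := e)).symm⟩⟩
  · rintro _ ⟨b, rfl⟩
    exact ⟨bᶜ, map_compl' Ψ b⟩
  · rintro _ ⟨b, rfl⟩ _ ⟨b', rfl⟩
    exact ⟨b ⊔ b', map_sup Ψ b b'⟩
  · exact hclosed (MAlg.closure_closure_subset _ (MAlg.closure_mono hD_closure (hφD a)))

/-- If `φ : A → M_κ` is a Boolean homomorphism whose induced measure `λ_κ ∘ φ` is
separable and atomless, then there is a Boolean subalgebra `M'` of `M_κ`, closed in the
metric `d_{λ_κ}`, containing `φ[A]`, and isomorphic (as a Boolean algebra) to `M`. -/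
theorem separable_name_is_added_by_single_random_real
    {A : Type u} [BooleanAlgebra A] (κ : Type u) [Infinite κ]
    (φ : BoundedLatticeHom A (MAlg (Cube κ) (lam κ)))
    (hsep : FASeparable (fun a : A => mval (lam κ) (φ a)))
    (hatomless : FAAtomless (fun a : A => mval (lam κ) (φ a))) :
    ∃ S : Set (MAlg (Cube κ) (lam κ)),
      (⊥ ∈ S) ∧ (⊤ ∈ S) ∧ (∀ x ∈ S, xᶜ ∈ S) ∧ (∀ x ∈ S, ∀ y ∈ S, x ⊔ y ∈ S) ∧
      (∀ a : A, φ a ∈ S) ∧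
      (∀ x : MAlg (Cube κ) (lam κ),
        (∀ ε : ℝ, 0 < ε → ∃ y ∈ S, mval (lam κ) (x ∆ y) < ε) → x ∈ S) ∧
      Nonempty (S ≃o MAlg (Cube ℕ) (lam ℕ)) :=
  separable_name_is_added_by_single_random_real_general κ φ hsep
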